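/- Let z^∞ be a fixed sequence over a finite alphabet 𝒵 and let θ_1, θ_2, … be drawn iid from a distribution on a finite alphabet Θ. Then for every k ≥ 1, with probability one, Ĥ^k(z^n) + Ĥ^k(θ^n) − Ĥ^k(((z_i, θ_i))_{i=1}^n) → 0 as n → ∞; that is, the k-th order block-by-block empirical mutual information between the fixed sequence z^∞ and the iid sequence θ^∞ vanishes almost surely. -/

import Mathlib

open MeasureTheory ProbabilityTheory Filter
open scoped ENNReal

/-- Base-2 Shannon entropy of a finitely-supported distribution given as a function. -/
noncomputable def ent2 {β : Type*} [Fintype β] (q : β → ℝ) : ℝ :=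
  ∑ b, -(q b * Real.logb 2 (q b))

/-- The `k`-th order block-by-block empirical distribution of `x^n`: the fraction of the
`⌊n/k⌋` disjoint `k`-blocks of `x^n` equal to a given word `w`. -/
noncomputable def blockDist {𝒳 : Type*} [DecidableEq 𝒳] (x : ℕ → 𝒳) (k n : ℕ)
    (w : Fin k → 𝒳) : ℝ :=
  (((Finset.range (n / k)).filter
      (fun i => (fun j : Fin k => x (k * i + (j : ℕ))) = w)).card : ℝ) / ((n / k : ℕ) : ℝ)

/-- The `k`-th order block-by-block empirical entropy `Ĥ^k(x^n)` (base 2). -/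
noncomputable def Hblock {𝒳 : Type*} [Fintype 𝒳] [DecidableEq 𝒳] (x : ℕ → 𝒳) (k n : ℕ) : ℝ :=
  ent2 (blockDist x k n)

/-- The `k`-th order sliding-window empirical distribution of `x^n`: the fraction of the
`n−k+1` length-`k` windows of `x^n` equal to a given word `w`. -/
noncomputable def swDist {𝒳 : Type*} [DecidableEq 𝒳] (x : ℕ → 𝒳) (k n : ℕ)
    (w : Fin k → 𝒳) : ℝ :=
  (((Finset.range (n - k + 1)).filter
      (fun i => (fun j : Fin k => x (i + (j : ℕ))) = w)).card : ℝ) / ((n - k + 1 : ℕ) : ℝ)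

/-- The `k`-th order sliding-window empirical entropy `Ĥ^k_sw(x^n)` (base 2). -/
noncomputable def Hsw {𝒳 : Type*} [Fintype 𝒳] [DecidableEq 𝒳] (x : ℕ → 𝒳) (k n : ℕ) : ℝ :=
  ent2 (swDist x k n)

/-!
Cut into consecutive `k`-blocks, `z` becomes a fixed sequence of words `x i` and `θ` a pairwise
independent, identically distributed sequence of words `Y i` with law `p`. For every pair of words
`(a, b)`, the strong law of large numbers applied along the times `i` with `x i = a` shows that the
joint empirical frequency of `(a, b)` is asymptotically the empirical frequency of `a` times `p b`
(if there are only finitely many such times, they contribute `O(1/N)`). So the empirical law of `Y`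
tends to `p` and the joint empirical law is asymptotically the product of the empirical law of `x`
with `p`. Entropy is uniformly continuous on `[0, 1]`-valued vectors and additive on products, so
`Ĥ(x) + Ĥ(Y) - Ĥ(x, Y)` is asymptotically `Ĥ(x) + H(p) - (Ĥ(x) + H(p)) = 0`.
-/

open Finset Real

section Entropy

variable {α β γ : Type*} [Fintype α] [Fintype β] [Fintype γ]

lemma ent2_eq_sum_negMulLog (q : β → ℝ) : ent2 q = (∑ b, negMulLog (q b)) / log 2 := by
  simp only [ent2, negMulLog, logb, sum_div]
  exact sum_congr rfl fun _ _ => by ring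

lemma ent2_comp_equiv (e : β ≃ γ) (q : γ → ℝ) : ent2 (q ∘ e) = ent2 q :=
  e.sum_comp fun c => -(q c * logb 2 (q c))

lemma ent2_mul {q : α → ℝ} {p : β → ℝ} (hq : ∑ a, q a = 1) (hp : ∑ b, p b = 1) :
    ent2 (fun x : α × β => q x.1 * p x.2) = ent2 q + ent2 p := by
  simp only [ent2_eq_sum_negMulLog, Fintype.sum_prod_type, negMulLog_mul, sum_add_distrib,
    ← sum_mul, ← mul_sum, hp, hq, one_mul, add_div]

lemma continuous_ent2 : Continuous (ent2 : (β → ℝ) → ℝ) := by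
  simp only [funext ent2_eq_sum_negMulLog]
  fun_prop

lemma uniformContinuousOn_ent2 :
    UniformContinuousOn (ent2 : (β → ℝ) → ℝ) (Set.univ.pi fun _ => Set.Icc 0 1) :=
  (isCompact_univ_pi fun _ => isCompact_Icc).uniformContinuousOn_of_continuous
    continuous_ent2.continuousOn

end Entropy

lemma UniformContinuousOn.tendsto_sub_of_tendsto_sub {E : Type*} [SeminormedAddCommGroup E]
    {f : E → ℝ} {s : Set E} (hf : UniformContinuousOn f s) {a b : ℕ → E} (ha : ∀ n, a n ∈ s)
    (hb : ∀ n, b n ∈ s) (hab : Tendsto (fun n => a n - b n) atTop (nhds 0)) :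
    Tendsto (fun n => f (a n) - f (b n)) atTop (nhds 0) := by
  have hpair : Tendsto (fun n => (a n, b n)) atTop (uniformity E ⊓ 𝓟 (s ×ˢ s)) := by
    refine tendsto_inf.2 ⟨tendsto_uniformity_iff_dist_tendsto_zero.2 ?_,
      tendsto_principal.2 (Eventually.of_forall fun n => ⟨ha n, hb n⟩)⟩
    simpa [dist_eq_norm] using hab.norm
  have := tendsto_uniformity_iff_dist_tendsto_zero.1 (Tendsto.comp hf hpair)
  simpa [dist_eq_norm] using (tendsto_zero_iff_norm_tendsto_zero).2 this

section EmpiricalDistribution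

variable {α β : Type*} [DecidableEq α] [DecidableEq β]

noncomputable def empDist (x : ℕ → α) (N : ℕ) (a : α) : ℝ :=
  (#{i ∈ range N | x i = a} : ℝ) / N

lemma empDist_nonneg (x : ℕ → α) (N : ℕ) (a : α) : 0 ≤ empDist x N a := by
  unfold empDist; positivity

lemma empDist_le_one (x : ℕ → α) (N : ℕ) (a : α) : empDist x N a ≤ 1 :=
  div_le_one_of_le₀ (by exact_mod_cast (card_filter_le _ _).trans (card_range N).le)
    (Nat.cast_nonneg _)

lemma sum_empDist [Fintype α] (x : ℕ → α) {N : ℕ} (hN : N ≠ 0) : ∑ a, empDist x N a = 1 := by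
  simp only [empDist, ← sum_div]
  rw [← Nat.cast_sum, ← card_eq_sum_card_fiberwise fun i _ => mem_univ (x i), card_range,
    div_self (Nat.cast_ne_zero.2 hN)]

lemma sum_empDist_prod_left [Fintype α] (x : ℕ → α) (y : ℕ → β) (N : ℕ) (b : β) :
    ∑ a, empDist (fun i => (x i, y i)) N (a, b) = empDist y N b := by
  simp only [empDist, ← sum_div, Prod.mk.injEq, and_comm (a := x _ = _), ← filter_filter]
  rw [← Nat.cast_sum, ← card_eq_sum_card_fiberwise fun i _ => mem_univ (x i)]

lemma empDist_prod_sub_mul (x : ℕ → α) (y : ℕ → β) (N : ℕ) (a : α) (b : β) (c : ℝ) :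
    empDist (fun i => (x i, y i)) N (a, b) - empDist x N a * c
      = (∑ i ∈ range N with x i = a, ((if y i = b then 1 else 0) - c)) / N := by
  simp only [empDist, Prod.mk.injEq, ← filter_filter, sum_sub_distrib, sum_boole, sum_const,
    nsmul_eq_mul, sub_div, div_mul_eq_mul_div]

lemma tendsto_ent2_mutualInfo_of_tendsto_sub_mul [Fintype α] [Fintype β] {x : ℕ → α}
    {y : ℕ → β} {p : β → ℝ} (hp0 : ∀ b, 0 ≤ p b) (hp1 : ∑ b, p b = 1)
    (h : ∀ a b, Tendsto (fun N => empDist (fun i => (x i, y i)) N (a, b) - empDist x N a * p b)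
      atTop (nhds 0)) :
    Tendsto (fun N => ent2 (empDist x N) + ent2 (empDist y N)
      - ent2 (empDist (fun i => (x i, y i)) N)) atTop (nhds 0) := by
  have hN : ∀ᶠ N in atTop, N ≠ 0 := eventually_ne_atTop 0
  have hy : Tendsto (empDist y) atTop (nhds p) := by
    refine tendsto_pi_nhds.2 fun b => tendsto_sub_nhds_zero_iff.1 ?_
    have hsum := tendsto_finsetSum univ fun a _ => h a b
    rw [sum_const_zero] at hsum
    refine hsum.congr' ?_
    filter_upwards [hN] with N hN
    rw [sum_sub_distrib, ← sum_mul, sum_empDist_prod_left, sum_empDist x hN, one_mul]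
  have hjoint : Tendsto (fun N => ent2 (fun u : α × β => empDist x N u.1 * p u.2)
      - ent2 (empDist (fun i => (x i, y i)) N)) atTop (nhds 0) := by
    have hp_le : ∀ b, p b ≤ 1 := fun b => hp1 ▸ single_le_sum (fun b _ => hp0 b) (mem_univ b)
    refine (uniformContinuousOn_ent2 (β := α × β)).tendsto_sub_of_tendsto_sub
      (a := fun N u => empDist x N u.1 * p u.2) (b := empDist (fun i => (x i, y i)))
      (fun N => Set.mem_univ_pi.2 fun u => ⟨mul_nonneg (empDist_nonneg _ _ _) (hp0 _),
        mul_le_one₀ (empDist_le_one _ _ _) (hp0 _) (hp_le _)⟩)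
      (fun N => Set.mem_univ_pi.2 fun u => ⟨empDist_nonneg _ _ _, empDist_le_one _ _ _⟩)
      (tendsto_pi_nhds.2 fun u => ?_)
    simpa using (h u.1 u.2).neg
  have hsum := ((continuous_ent2.tendsto p).comp hy).sub_const (ent2 p) |>.add hjoint
  rw [sub_self, zero_add] at hsum
  refine hsum.congr' ?_
  filter_upwards [hN] with N hN
  rw [Function.comp_apply, ent2_mul (sum_empDist x hN) hp1]
  ring

end EmpiricalDistribution

section AveragesAlongSubsets

open Nat

variable {p : ℕ → Prop} [DecidablePred p]

lemma sum_filter_range_eq_sum_range_count {M : Type*} [AddCommMonoid M] (f : ℕ → M) (N : ℕ) :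
    ∑ i ∈ range N with p i, f i = ∑ m ∈ range (count p N), f (nth p m) := by
  induction N with
  | zero => simp
  | succ N ih =>
    rw [sum_filter, sum_range_succ, ← sum_filter, ih, count_succ]
    split_ifs with hN
    · rw [sum_range_succ, nth_count hN]
    · rw [add_zero, add_zero]

lemma tendsto_count_atTop (hp : {i | p i}.Infinite) : Tendsto (count p) atTop atTop :=
  tendsto_atTop_atTop_of_monotone (count_monotone p) fun b =>
    ⟨nth p b + 1, (count_nth_succ_of_infinite hp b).ge.trans' (le_succ b)⟩

lemma tendsto_sum_filter_div_of_infinite (hp : {i | p i}.Infinite) {f : ℕ → ℝ}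
    (hf : Tendsto (fun M : ℕ => (∑ m ∈ range M, f (nth p m)) / M) atTop (nhds 0)) :
    Tendsto (fun N : ℕ => (∑ i ∈ range N with p i, f i) / N) atTop (nhds 0) := by
  refine squeeze_zero_norm
    (a := fun N => ‖(∑ m ∈ range (count p N), f (nth p m)) / count p N‖) (fun N => ?_)
    (by simpa only [norm_zero, Function.comp_def] using (hf.comp (tendsto_count_atTop hp)).norm)
  rw [sum_filter_range_eq_sum_range_count, norm_div, norm_div,
    RCLike.norm_natCast, RCLike.norm_natCast]
  rcases (count p N).eq_zero_or_pos with h0 | hpos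
  · simp [h0]
  · exact div_le_div_of_nonneg_left (norm_nonneg _) (cast_pos.2 hpos)
      (cast_le.2 (count_le p))

lemma tendsto_sum_filter_div_of_finite (hp : {i | p i}.Finite) (f : ℕ → ℝ) :
    Tendsto (fun N : ℕ => (∑ i ∈ range N with p i, f i) / N) atTop (nhds 0) := by
  obtain ⟨B, hB⟩ := hp.bddAbove
  refine (tendsto_const_div_atTop_nhds_zero_nat (∑ i ∈ hp.toFinset, f i)).congr' ?_
  filter_upwards [eventually_gt_atTop B] with N hN
  congr 2
  ext i
  simp only [Set.Finite.mem_toFinset, mem_filter, mem_range, Set.mem_ofPred_eq]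
  exact ⟨fun hi => ⟨(hB hi).trans_lt hN, hi⟩, And.right⟩

variable {Ω : Type*} {mΩ : MeasurableSpace Ω} {μ : Measure Ω}

theorem ae_tendsto_sum_filter_sub_integral_div {X : ℕ → Ω → ℝ} (hint : Integrable (X 0) μ)
    (hindep : Pairwise fun i j => X i ⟂ᵢ[μ] X j) (hident : ∀ i, IdentDistrib (X i) (X 0) μ μ) :
    ∀ᵐ ω ∂μ, Tendsto (fun N : ℕ => (∑ i ∈ range N with p i, (X i ω - μ[X 0])) / N)
      atTop (nhds 0) := by
  rcases Set.finite_or_infinite {i | p i} with hp | hp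
  · exact ae_of_all _ fun ω => tendsto_sum_filter_div_of_finite hp _
  have hslln := strong_law_ae_real (fun m => X (nth p m)) ((hident _).integrable_iff.2 hint)
    (fun m m' h => hindep ((nth_injective hp).ne h)) fun m => (hident _).trans (hident _).symm
  rw [(hident _).integral_eq] at hslln
  filter_upwards [hslln] with ω hω
  refine tendsto_sum_filter_div_of_infinite hp ?_
  have hω' := hω.sub_const μ[X 0]
  rw [sub_self] at hω'
  refine hω'.congr' ?_
  filter_upwards [eventually_ne_atTop 0] with M hM
  rw [sum_sub_distrib, sum_const, card_range, nsmul_eq_mul, sub_div,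
    mul_div_cancel_left₀ _ (cast_ne_zero.2 hM)]

end AveragesAlongSubsets

section EmpiricalMutualInformation

variable {Ω α β : Type*} {mΩ : MeasurableSpace Ω} {μ : Measure Ω}
  [DecidableEq α] [DecidableEq β] [MeasurableSpace β] [MeasurableSingletonClass β] {Y : ℕ → Ω → β}

theorem ae_tendsto_empDist_prod_sub_mul [IsFiniteMeasure μ] (x : ℕ → α)
    (hY0 : Measurable (Y 0)) (hindep : Pairwise fun i j => Y i ⟂ᵢ[μ] Y j)
    (hident : ∀ i, IdentDistrib (Y i) (Y 0) μ μ) (a : α) (b : β) :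
    ∀ᵐ ω ∂μ, Tendsto (fun N => empDist (fun i => (x i, Y i ω)) N (a, b)
      - empDist x N a * μ.real (Y 0 ⁻¹' {b})) atTop (nhds 0) := by
  set g : β → ℝ := fun y => if y = b then 1 else 0
  have hg : Measurable g := measurable_const.ite (measurableSet_singleton b) measurable_const
  have hg0 : g ∘ Y 0 = (Y 0 ⁻¹' {b}).indicator 1 := by
    ext ω
    by_cases h : Y 0 ω = b <;> simp [g, h]
  have hb : MeasurableSet (Y 0 ⁻¹' {b}) := hY0 (measurableSet_singleton b)
  have hmean : μ[g ∘ Y 0] = μ.real (Y 0 ⁻¹' {b}) := by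
    rw [hg0, integral_indicator_one hb]
  have h := ae_tendsto_sum_filter_sub_integral_div (p := fun i => x i = a)
    (X := fun i => g ∘ Y i)
    (hg0 ▸ (integrable_const 1).indicator hb) (fun i j hij => (hindep hij).comp hg hg)
    fun i => (hident i).comp hg
  rw [hmean] at h
  filter_upwards [h] with ω hω
  simp only [empDist_prod_sub_mul]
  exact hω

theorem ae_tendsto_ent2_empDist_mutualInfo [IsProbabilityMeasure μ] [Fintype α] [Fintype β]
    (x : ℕ → α) (hY0 : Measurable (Y 0)) (hindep : Pairwise fun i j => Y i ⟂ᵢ[μ] Y j)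
    (hident : ∀ i, IdentDistrib (Y i) (Y 0) μ μ) :
    ∀ᵐ ω ∂μ, Tendsto (fun N => ent2 (empDist x N) + ent2 (empDist (Y · ω) N)
      - ent2 (empDist (fun i => (x i, Y i ω)) N)) atTop (nhds 0) := by
  have hfreq : ∀ᵐ ω ∂μ, ∀ a b, Tendsto (fun N => empDist (fun i => (x i, Y i ω)) N (a, b)
      - empDist x N a * μ.real (Y 0 ⁻¹' {b})) atTop (nhds 0) := by
    simp only [ae_all_iff]
    exact ae_tendsto_empDist_prod_sub_mul x hY0 hindep hident
  have hsum : ∑ b, μ.real (Y 0 ⁻¹' {b}) = 1 := by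
    rw [sum_measureReal_preimage_singleton _ fun b _ => hY0 (measurableSet_singleton b),
      coe_univ, Set.preimage_univ, probReal_univ]
  filter_upwards [hfreq] with ω hω
  exact tendsto_ent2_mutualInfo_of_tendsto_sub_mul (fun _ => measureReal_nonneg) hsum hω

end EmpiricalMutualInformation

section Blocks

variable {α β Ω : Type*}

def block (x : ℕ → α) (k i : ℕ) : Fin k → α := fun j => x (k * i + j)

lemma Hblock_eq_ent2_empDist [Fintype α] [DecidableEq α] (x : ℕ → α) (k n : ℕ) :
    Hblock x k n = ent2 (empDist (block x k) (n / k)) := rfl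

lemma Hblock_prod_eq_ent2_empDist [Fintype α] [DecidableEq α] [Fintype β] [DecidableEq β]
    (x : ℕ → α) (y : ℕ → β) (k n : ℕ) :
    Hblock (fun i => (x i, y i)) k n
      = ent2 (empDist (fun i => (block x k i, block y k i)) (n / k)) := by
  rw [Hblock, ← ent2_comp_equiv (Equiv.arrowProdEquivProdArrow _ _ _)]
  congr 1
  funext u
  simp only [blockDist, empDist, Function.comp_apply, Equiv.arrowProdEquivProdArrow_apply, block,
    funext_iff, Prod.ext_iff, forall_and]

lemma disjoint_Ico_mul_add {k i i' : ℕ} (h : i ≠ i') :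
    Disjoint (Ico (k * i) (k * i + k)) (Ico (k * i') (k * i' + k)) := by
  have hdiv : ∀ {j m : ℕ}, m ∈ Ico (k * j) (k * j + k) → m / k = j := fun hm => by
    rw [mem_Ico] at hm
    exact Nat.div_eq_of_lt_le (by rw [mul_comm]; exact hm.1)
      (by rw [add_one_mul, mul_comm]; exact hm.2)
  exact disjoint_left.2 fun m hm hm' => h ((hdiv hm).symm.trans (hdiv hm'))

variable {mΩ : MeasurableSpace Ω} {μ : Measure Ω} [MeasurableSpace β] {θ : ℕ → Ω → β}

lemma measurable_block (hmeas : ∀ i, Measurable (θ i)) (k i : ℕ) :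
    Measurable fun ω => block (θ · ω) k i :=
  measurable_pi_lambda _ fun _ => hmeas _

lemma ProbabilityTheory.iIndepFun.indepFun_block (hθ : iIndepFun θ μ)
    (hmeas : ∀ i, Measurable (θ i)) (k : ℕ) :
    Pairwise fun i i' => (fun ω => block (θ · ω) k i) ⟂ᵢ[μ] (fun ω => block (θ · ω) k i') := by
  intro i i' h
  have hmem : ∀ (j : ℕ) (l : Fin k), k * j + l ∈ Ico (k * j) (k * j + k) := fun j l =>
    mem_Ico.2 ⟨Nat.le_add_right _ _, Nat.add_lt_add_left l.isLt _⟩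
  have hr : ∀ j, Measurable fun (f : Ico (k * j) (k * j + k) → β) (l : Fin k) =>
      f ⟨k * j + l, hmem j l⟩ := fun j => measurable_pi_lambda _ fun l => measurable_pi_apply _
  exact (hθ.indepFun_finset _ _ (disjoint_Ico_mul_add h) hmeas).comp (hr i) (hr i')

lemma identDistrib_block [IsProbabilityMeasure μ] (hθ : iIndepFun θ μ)
    (hmeas : ∀ i, Measurable (θ i)) (hident : ∀ i, μ.map (θ i) = μ.map (θ 0)) (k i : ℕ) :
    IdentDistrib (fun ω => block (θ · ω) k i) (fun ω => block (θ · ω) k 0) μ μ := by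
  have hlaw : ∀ j, μ.map (fun ω => block (θ · ω) k j) = Measure.pi fun _ => μ.map (θ 0) := by
    intro j
    have hind : iIndepFun (fun l : Fin k => θ (k * j + l)) μ :=
      hθ.precomp fun l l' h => Fin.ext (Nat.add_left_cancel h)
    calc μ.map (fun ω => block (θ · ω) k j)
        _ = Measure.pi fun l : Fin k => μ.map (θ (k * j + l)) :=
          (iIndepFun_iff_map_fun_eq_pi_map fun l => (hmeas _).aemeasurable).1 hind
        _ = Measure.pi fun _ => μ.map (θ 0) := by simp_rw [hident]
  exact ⟨(measurable_block hmeas k i).aemeasurable, (measurable_block hmeas k 0).aemeasurable,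
    by rw [hlaw, hlaw]⟩

end Blocks

/-- Claim used in the paper's proofs of Theorems 1 and 2: for a fixed sequence `z` over a
finite alphabet and an iid sequence `θ` over a finite alphabet, the `k`-th order
block-by-block empirical mutual information
`Ĥ^k(z^n) + Ĥ^k(θ^n) − Ĥ^k((z,θ)^n)` vanishes almost surely as `n → ∞`, for every `k ≥ 1`. -/
theorem empirical_mutual_information_vanishes
    {Ω : Type*} [MeasurableSpace Ω] (μ : Measure Ω) [IsProbabilityMeasure μ]
    {𝒵 Θ : Type*} [Fintype 𝒵] [DecidableEq 𝒵] [Fintype Θ] [DecidableEq Θ]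
    [MeasurableSpace Θ] [MeasurableSingletonClass Θ]
    (z : ℕ → 𝒵) (θ : ℕ → Ω → Θ) (hθmeas : ∀ i, Measurable (θ i))
    (hθindep : iIndepFun θ μ)
    (hθident : ∀ i j, Measure.map (θ i) μ = Measure.map (θ j) μ)
    (k : ℕ) (hk : 1 ≤ k) :
    ∀ᵐ ω ∂μ,
      Tendsto
        (fun n : ℕ =>
          Hblock z k n + Hblock (fun i => θ i ω) k n
            - Hblock (fun i => (z i, θ i ω)) k n)
        atTop (nhds 0) := by
  filter_upwards [ae_tendsto_ent2_empDist_mutualInfo (block z k) (measurable_block hθmeas k 0)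
    (hθindep.indepFun_block hθmeas k)
    (identDistrib_block hθindep hθmeas (fun i => hθident i 0) k)] with ω hω
  have hblocks : Tendsto (· / k) atTop atTop :=
    Nat.tendsto_div_const_atTop (Nat.one_le_iff_ne_zero.1 hk)
  refine (hω.comp hblocks).congr fun n => ?_
  rw [Function.comp_apply, Hblock_prod_eq_ent2_empDist, Hblock_eq_ent2_empDist,
    Hblock_eq_ent2_empDist]
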